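/- arXiv:1905.11981 — 2 statements merged into one kernel-verified Lean document; each statement's English description precedes it below -/
import Mathlib

section
/- Let k ≥ 2 be an integer. For any words u, v, w ∈ Σ_k^* with [u]_k ≠ 0 and [w]_k ≠ 0, there exists D ∈ ℕ such that the following is true: for any prime p there exists Q ∈ ℕ such that for every l ∈ ℕ divisible by Q, the p-adic valuation satisfies ν_p([w v^l u]_k) ≤ ν_p(D). -/
/-
For `v ≠ ε` put `K = k^|v|` and `c = K - 1`. Summing the geometric series gives
`c · [w v^l u]_k = A K^l + B` with integers `A, B` independent of `l`, where
`B = [u]_k c - [v]_k k^|u|` is nonzero because `k^|u|` is coprime to `c` and cannot divide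
`[u]_k`, as `0 < [u]_k < k^|u|`; and `A + B = c [w u]_k` is nonzero as well. For a prime `p ∣ K`, once
`p^l` exceeds the `p`-part of `B` the valuation of `A K^l + B` is that of `B`. For `p ∤ K`, Euler's
theorem makes `K^l ≡ 1` modulo a power of `p` beyond the `p`-part of `A + B` whenever `l` is
a multiple of its totient, so `A K^l + B ≡ A + B`. Hence `D = |B (A + B)|` works.
-/

open scoped BigOperators

namespace MultAuto

/-- Base-`k` value of a word over `Σ_k` (most significant digit first); `[ε]_k = 0`. -/
def valk (k : ℕ) (u : List ℕ) : ℕ := u.foldl (fun acc d => k * acc + d) 0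

/-- `u` is a word over the alphabet `Σ_k = {0,…,k-1}`. -/
def IsWord (k : ℕ) (u : List ℕ) : Prop := ∀ d ∈ u, d < k

/-- `u` has no leading zeros (the empty word qualifies). -/
def NoLeadZero : List ℕ → Prop
  | [] => True
  | d :: _ => d ≠ 0

/-- `wpow v l` is the `l`-fold concatenation `v^l`. -/
def wpow (v : List ℕ) (l : ℕ) : List ℕ := (List.replicate l v).flatten

/-- Transition function of a word: `δ_{uv} = δ_u ∘ δ_v`. -/
def deltaW {S : Type*} (δ : ℕ → S → S) : List ℕ → S → S
  | [] => id
  | d :: t => δ d ∘ deltaW δ t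

/-- `a : ℕ → ℂ` is a `k`-automatic sequence. -/
def IsAutomatic (k : ℕ) (a : ℕ → ℂ) : Prop :=
  ∃ (S : Type) (_ : Fintype S) (s₀ : S) (δ : ℕ → S → S) (τ : S → ℂ),
    ∀ u : List ℕ, IsWord k u → NoLeadZero u → a (valk k u) = τ (deltaW δ u s₀)

/-- `a` is multiplicative: `a (m n) = a m * a n` for coprime positive `m, n`. -/
def IsMult (a : ℕ → ℂ) : Prop :=
  ∀ m n : ℕ, 0 < m → 0 < n → Nat.Coprime m n → a (m * n) = a m * a n

/-- The word `u_r v_r^{l_r} u_{r-1} ⋯ u_1 v_1^{l_1} u_0`. -/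
def aridWord (u v : ℕ → List ℕ) (l : ℕ → ℕ) : ℕ → List ℕ
  | 0 => u 0
  | r + 1 => u (r + 1) ++ wpow (v (r + 1)) (l (r + 1)) ++ aridWord u v l r

/-- `A` is a basic arid set of rank ≤ r in base k. -/
def BasicArid (k r : ℕ) (A : Set ℕ) : Prop :=
  ∃ u v : ℕ → List ℕ, (∀ i, IsWord k (u i)) ∧ (∀ i, IsWord k (v i)) ∧
    A = {n | ∃ l : ℕ → ℕ, n = valk k (aridWord u v l r)}

/-- `A` is an arid set of rank ≤ r: a finite union of basic arid sets of rank ≤ r. -/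
def AridOfRank (k r : ℕ) (A : Set ℕ) : Prop :=
  ∃ (m : ℕ) (B : Fin m → Set ℕ), (∀ j, BasicArid k r (B j)) ∧ A = ⋃ j, B j

/-- `A` is arid (in base `k`). -/
def Arid (k : ℕ) (A : Set ℕ) : Prop := ∃ r, AridOfRank k r A

/-- `χ : ℕ → ℂ` is a Dirichlet character of modulus `m`: completely multiplicative,
`m`-periodic, and nonvanishing exactly at integers coprime to `m`. -/
def IsDirichletLike (m : ℕ) (χ : ℕ → ℂ) : Prop :=
  0 < m ∧ (∀ a b : ℕ, 0 < a → 0 < b → χ (a * b) = χ a * χ b) ∧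
  (∀ n : ℕ, 0 < n → χ (n + m) = χ n) ∧
  (∀ n : ℕ, 0 < n → (χ n ≠ 0 ↔ Nat.Coprime n m))

/-- `(n)_k^l`: the last `l` base-`k` digits of `n`, padded with leading zeros,
most significant digit first. -/
def padk (k l n : ℕ) : List ℕ := (List.range l).reverse.map fun i => n / k ^ i % k

/-- The equivalence `n₁ ∼ n₂` on `ℕ` induced by the transition maps `δ`. -/
def EqvN (k : ℕ) {S : Type*} (δ : ℕ → S → S) (n₁ n₂ : ℕ) : Prop :=
  ∃ l₀ : ℕ, ∀ l ≥ l₀, deltaW δ (padk k l n₁) = deltaW δ (padk k l n₂)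

/-- `E ⊆ ℕ` has upper Banach density zero. -/
def UpperBanachDensityZero (E : Set ℕ) : Prop :=
  ∀ ε : ℝ, 0 < ε → ∃ N₀ : ℕ, ∀ N ≥ N₀, ∀ M : ℕ,
    ((E ∩ Set.Ico M (M + N)).ncard : ℝ) ≤ ε * N


section PadicValuation

variable {p : ℕ}

lemma padicValInt_le_of_not_dvd {a : ℤ} {t : ℕ} (h : ¬ (p : ℤ) ^ (t + 1) ∣ a) :
    padicValInt p a ≤ t := by
  by_contra! hlt
  exact h ((pow_dvd_pow _ hlt).trans (padicValInt_dvd a))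

variable [Fact p.Prime]

lemma padicValInt_mul_pow_add_le_of_dvd {K : ℕ} (hpK : p ∣ K) (A : ℤ) {B : ℤ} (hB : B ≠ 0)
    {l : ℕ} (hl : padicValInt p B < l) :
    padicValInt p (A * K ^ l + B) ≤ padicValInt p B := by
  refine padicValInt_le_of_not_dvd fun h => ?_
  have hK : (p : ℤ) ^ (padicValInt p B + 1) ∣ A * K ^ l :=
    ((pow_dvd_pow _ hl).trans (pow_dvd_pow_of_dvd (Int.natCast_dvd_natCast.2 hpK) l)).mul_left A
  have hpB := (padicValInt_dvd_iff _ B).1 ((dvd_add_right hK).1 h)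
  omega

lemma padicValInt_mul_pow_totient_mul_add_le {K : ℕ} (hpK : ¬ p ∣ K) (A : ℤ) {B : ℤ}
    (hAB : A + B ≠ 0) (j : ℕ) :
    padicValInt p (A * K ^ (Nat.totient (p ^ (padicValInt p (A + B) + 1)) * j) + B)
      ≤ padicValInt p (A + B) := by
  set t := padicValInt p (A + B)
  have hcop : K.Coprime (p ^ (t + 1)) :=
    (Nat.Coprime.pow_left _ ((Nat.Prime.coprime_iff_not_dvd Fact.out).2 hpK)).symm
  have hEuler : (p : ℤ) ^ (t + 1) ∣ (K : ℤ) ^ (Nat.totient (p ^ (t + 1)) * j) - 1 := by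
    have h := Nat.modEq_iff_dvd.1 ((Nat.ModEq.pow_totient hcop).pow j).symm
    push_cast at h
    rwa [one_pow, ← pow_mul] at h
  refine padicValInt_le_of_not_dvd fun h => ?_
  have hsplit : A * K ^ (Nat.totient (p ^ (t + 1)) * j) + B
      = A * ((K : ℤ) ^ (Nat.totient (p ^ (t + 1)) * j) - 1) + (A + B) := by ring
  rw [hsplit] at h
  have hpAB := (padicValInt_dvd_iff _ (A + B)).1 ((dvd_add_right (hEuler.mul_left A)).1 h)
  omega

lemma exists_padicValInt_mul_pow_add_le (K : ℕ) {A B : ℤ} (hB : B ≠ 0) (hAB : A + B ≠ 0) :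
    ∃ Q : ℕ, 0 < Q ∧ ∀ l : ℕ, 0 < l → Q ∣ l →
      padicValInt p (A * K ^ l + B) ≤ padicValInt p (B * (A + B)) := by
  rw [padicValInt.mul hB hAB]
  by_cases hpK : p ∣ K
  · refine ⟨padicValInt p B + 1, Nat.succ_pos _, fun l hl hQl => ?_⟩
    have := padicValInt_mul_pow_add_le_of_dvd hpK A hB (Nat.le_of_dvd hl hQl)
    omega
  · refine ⟨Nat.totient (p ^ (padicValInt p (A + B) + 1)),
      Nat.totient_pos.2 (pow_pos (Fact.out : p.Prime).pos _), ?_⟩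
    rintro l - ⟨j, rfl⟩
    have := padicValInt_mul_pow_totient_mul_add_le hpK A hAB j
    omega

end PadicValuation

lemma valk_foldl (k a : ℕ) (u : List ℕ) :
    u.foldl (fun acc d => k * acc + d) a = a * k ^ u.length + valk k u := by
  induction u generalizing a with
  | nil => simp [valk]
  | cons d t ih =>
    have hcons : valk k (d :: t) = d * k ^ t.length + valk k t := by
      simpa [valk] using ih (k * 0 + d)
    simp only [List.foldl_cons, List.length_cons, hcons, ih (k * a + d)]
    ring

lemma valk_append (k : ℕ) (x y : List ℕ) :
    valk k (x ++ y) = valk k x * k ^ y.length + valk k y := by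
  rw [valk, List.foldl_append]
  exact valk_foldl k _ y

lemma valk_cons (k d : ℕ) (u : List ℕ) : valk k (d :: u) = d * k ^ u.length + valk k u := by
  simpa [valk] using valk_append k [d] u

lemma valk_append_ne_zero (k : ℕ) (x : List ℕ) {y : List ℕ} (hy : valk k y ≠ 0) :
    valk k (x ++ y) ≠ 0 := by
  rw [valk_append]
  omega

lemma valk_lt_pow_length {k : ℕ} {u : List ℕ} (hu : IsWord k u) : valk k u < k ^ u.length := by
  induction u with
  | nil => simp [valk]
  | cons d t ih =>
    have hd : d < k := hu d (by simp)
    have ht : valk k t < k ^ t.length := ih fun x hx => hu x (by simp [hx])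
    calc valk k (d :: t) < (d + 1) * k ^ t.length := by rw [valk_cons]; linarith
      _ ≤ k * k ^ t.length := Nat.mul_le_mul_right _ hd
      _ = k ^ (d :: t).length := by rw [List.length_cons, pow_succ, mul_comm]

@[simp]
lemma wpow_zero (v : List ℕ) : wpow v 0 = [] := rfl

lemma wpow_succ (v : List ℕ) (l : ℕ) : wpow v (l + 1) = v ++ wpow v l := by
  simp [wpow, List.replicate_succ]

lemma length_wpow (v : List ℕ) (l : ℕ) : (wpow v l).length = l * v.length := by
  simp [wpow]

@[simp]
lemma wpow_nil (l : ℕ) : wpow [] l = [] := by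
  simp [wpow]

lemma pow_length_sub_one_mul_valk_wpow (k : ℕ) (v : List ℕ) (l : ℕ) :
    ((k : ℤ) ^ v.length - 1) * valk k (wpow v l) = valk k v * (((k : ℤ) ^ v.length) ^ l - 1) := by
  induction l with
  | zero => simp [valk]
  | succ n ih =>
    rw [wpow_succ, valk_append, length_wpow, mul_comm n, pow_mul]
    push_cast
    linear_combination ih

lemma pow_length_sub_one_mul_valk_append_wpow_append (k : ℕ) (w v u : List ℕ) (l : ℕ) :
    ((k : ℤ) ^ v.length - 1) * valk k (w ++ wpow v l ++ u) =
      (valk k w * ((k : ℤ) ^ v.length - 1) + valk k v) * k ^ u.length * ((k : ℤ) ^ v.length) ^ l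
        + (valk k u * ((k : ℤ) ^ v.length - 1) - valk k v * k ^ u.length) := by
  rw [valk_append, valk_append, length_wpow, mul_comm l, pow_mul]
  push_cast
  linear_combination (k : ℤ) ^ u.length * pow_length_sub_one_mul_valk_wpow k v l

lemma valk_mul_pow_sub_one_ne {k : ℕ} {u : List ℕ} (hu : IsWord k u) (hu0 : valk k u ≠ 0)
    {m : ℕ} (hm : m ≠ 0) (x : ℤ) : (valk k u : ℤ) * ((k : ℤ) ^ m - 1) ≠ x * k ^ u.length := by
  intro h
  have hcop : IsCoprime ((k : ℤ) ^ u.length) ((k : ℤ) ^ m - 1) :=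
    IsCoprime.pow_left ⟨(k : ℤ) ^ (m - 1), -1, by rw [pow_sub_one_mul hm]; ring⟩
  have hdvd : (k : ℤ) ^ u.length ∣ valk k u :=
    hcop.dvd_of_dvd_mul_right ⟨x, by rw [h, mul_comm]⟩
  have hle := Int.le_of_dvd (by omega) hdvd
  have hlt := valk_lt_pow_length hu
  exact absurd hle (by exact_mod_cast hlt.not_ge)

theorem stmt8_general (k : ℕ) (hk : 2 ≤ k) (u v w : List ℕ)
    (hu : IsWord k u)
    (hu0 : valk k u ≠ 0) :
    ∃ D : ℕ, 0 < D ∧ ∀ p : ℕ, p.Prime → ∃ Q : ℕ, 0 < Q ∧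
      ∀ l : ℕ, 0 < l → Q ∣ l →
        padicValNat p (valk k (w ++ wpow v l ++ u)) ≤ padicValNat p D := by
  rcases eq_or_ne v [] with rfl | hv
  · exact ⟨valk k (w ++ u), Nat.pos_of_ne_zero (valk_append_ne_zero k w hu0),
      fun _ _ => ⟨1, one_pos, fun l _ _ => by simp⟩⟩
  set K : ℤ := (k : ℤ) ^ v.length
  set A : ℤ := (valk k w * (K - 1) + valk k v) * k ^ u.length
  set B : ℤ := valk k u * (K - 1) - valk k v * k ^ u.length
  have hK : K - 1 ≠ 0 := by
    have : 1 < K := one_lt_pow₀ (by exact_mod_cast hk) (List.length_pos_iff.2 hv).ne'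
    omega
  have hB : B ≠ 0 := sub_ne_zero.2 (valk_mul_pow_sub_one_ne hu hu0 (List.length_pos_iff.2 hv).ne' _)
  have hAB : A + B = (K - 1) * valk k (w ++ u) := by
    simpa using (pow_length_sub_one_mul_valk_append_wpow_append k w v u 0).symm
  have hAB0 : A + B ≠ 0 := by
    rw [hAB]; exact mul_ne_zero hK (by exact_mod_cast valk_append_ne_zero k w hu0)
  refine ⟨(B * (A + B)).natAbs, Int.natAbs_pos.2 (mul_ne_zero hB hAB0), fun p hp => ?_⟩
  have := Fact.mk hp
  obtain ⟨Q, hQ, hbound⟩ := exists_padicValInt_mul_pow_add_le (p := p) (k ^ v.length) hB hAB0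
  refine ⟨Q, hQ, fun l hl hQl => ?_⟩
  have hN : (valk k (w ++ wpow v l ++ u) : ℤ) ≠ 0 := by exact_mod_cast valk_append_ne_zero _ _ hu0
  have hid : (K - 1) * valk k (w ++ wpow v l ++ u) = A * K ^ l + B :=
    pow_length_sub_one_mul_valk_append_wpow_append k w v u l
  calc padicValNat p (valk k (w ++ wpow v l ++ u))
      = padicValInt p (valk k (w ++ wpow v l ++ u)) := padicValInt.of_nat.symm
    _ ≤ padicValInt p ((K - 1) * valk k (w ++ wpow v l ++ u)) := by
      rw [padicValInt.mul hK hN]; omega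
    _ = padicValInt p (A * K ^ l + B) := by rw [hid]
    _ ≤ padicValInt p (B * (A + B)) := by exact_mod_cast hbound l hl hQl

/-- uniform bound on `ν_p([w v^l u]_k)` along multiples of a suitable `Q`. -/
theorem stmt8 (k : ℕ) (hk : 2 ≤ k) (u v w : List ℕ)
    (hu : IsWord k u) (hv : IsWord k v) (hw : IsWord k w)
    (hu0 : valk k u ≠ 0) (hw0 : valk k w ≠ 0) :
    ∃ D : ℕ, 0 < D ∧ ∀ p : ℕ, p.Prime → ∃ Q : ℕ, 0 < Q ∧
      ∀ l : ℕ, 0 < l → Q ∣ l →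
        padicValNat p (valk k (w ++ wpow v l ++ u)) ≤ padicValNat p D :=
  stmt8_general k hk u v w hu hu0

end MultAuto
end

section
/- Let k ≥ 2 be an integer and let A = (S, s₀, δ, τ) be a finite automaton over the alphabet Σ_k. Then there exists a threshold p₃ such that for every prime p > p₃ there exist n₁, n₂ ∈ ℕ₀ with n₁ ≢ n₂ (mod p) such that n₁ ∼ n₂ and p·n₁ ∼ p·n₂, where ∼ is the equivalence on ℕ₀ induced by the transition functions of A. -/
open scoped BigOperators

namespace MultAuto

/-!
Since `S` is finite, some power `δ₀^e` (`e ≥ 1`) of the transition map of the digit `0` is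
idempotent, hence `δ₀^(s+e) = δ₀^s` for `s ≥ e`. Appending `e` more zeros to the base-`k`
expansion therefore does not change its transition map (after enough leading zeros), so
`m k^e ∼ m k^(2e)` for every `m`. Take `n₁ = k^e`, `n₂ = k^(2e)`: for a prime `p > k^e`,
`k^e ≢ k^(2e) (mod p)` because `k^e` is neither `0` nor `1` modulo `p`.
-/

lemma deltaW_append {S : Type*} (δ : ℕ → S → S) (u v : List ℕ) :
    deltaW δ (u ++ v) = deltaW δ u ∘ deltaW δ v := by
  induction u with
  | nil => rfl
  | cons d t ih => simp only [List.cons_append, deltaW, ih, Function.comp_assoc]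

lemma deltaW_replicate {S : Type*} (δ : ℕ → S → S) (d t : ℕ) :
    deltaW δ (List.replicate t d) = (δ d)^[t] := by
  induction t with
  | zero => rfl
  | succ t ih => rw [List.replicate_succ, Function.iterate_succ']; simp only [deltaW, ih]

lemma padk_succ (k l n : ℕ) : padk k (l + 1) n = (n / k ^ l % k) :: padk k l n := by
  simp [padk, List.range_succ]

lemma padk_mul_pow {k : ℕ} (hk : 0 < k) (c n l : ℕ) :
    padk k (l + c) (n * k ^ c) = padk k l n ++ List.replicate c 0 := by
  induction l generalizing n with
  | zero =>
    induction c generalizing n with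
    | zero => rfl
    | succ c ih =>
      have hshift : n * k ^ (c + 1) = (n * k) * k ^ c := by ring
      rw [zero_add] at ih ⊢
      rw [padk_succ, hshift, Nat.mul_div_cancel _ (pow_pos hk c), ih, Nat.mul_mod_left,
        List.replicate_succ]
      rfl
  | succ l ih =>
    have hdiv : n * k ^ c / k ^ (l + c) = n / k ^ l := by
      rw [pow_add, mul_comm (k ^ l), ← Nat.div_div_eq_div_mul, Nat.mul_div_cancel _ (pow_pos hk c)]
    rw [Nat.add_right_comm, padk_succ, hdiv, ih, padk_succ, List.cons_append]

lemma padk_add_of_lt {k l n : ℕ} (hk : 0 < k) (hn : n < k ^ l) (t : ℕ) :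
    padk k (l + t) n = List.replicate t 0 ++ padk k l n := by
  induction t with
  | zero => rfl
  | succ t ih =>
    have hdiv : n / k ^ (l + t) = 0 :=
      Nat.div_eq_of_lt (hn.trans_le (Nat.pow_le_pow_right hk (Nat.le_add_right l t)))
    rw [← Nat.add_assoc, padk_succ, hdiv, Nat.zero_mod, ih, List.replicate_succ, List.cons_append]

lemma deltaW_padk_mul_pow {k l n : ℕ} (hk : 0 < k) (hn : n < k ^ l) {S : Type*}
    (δ : ℕ → S → S) (t c : ℕ) :
    deltaW δ (padk k (l + t + c) (n * k ^ c)) =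
      (δ 0)^[t] ∘ deltaW δ (padk k l n) ∘ (δ 0)^[c] := by
  rw [padk_mul_pow hk, padk_add_of_lt hk hn, deltaW_append, deltaW_append,
    deltaW_replicate, deltaW_replicate, Function.comp_assoc]

lemma Finite.exists_iterate_add_self_eq {α : Type*} [Finite α] (f : α → α) :
    ∃ e, 0 < e ∧ f^[e + e] = f^[e] := by
  obtain ⟨i, j, hij, hfij⟩ : ∃ i j, i < j ∧ f^[i] = f^[j] := by
    obtain ⟨x, y, hxy, hf⟩ := Finite.exists_ne_map_eq_of_infinite (fun n : ℕ => f^[n])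
    rcases hxy.lt_or_gt with h | h
    exacts [⟨x, y, h, hf⟩, ⟨y, x, h, hf.symm⟩]
  have hperiod : ∀ c s, i ≤ s → f^[s + c * (j - i)] = f^[s] := by
    intro c
    induction c with
    | zero => simp
    | succ c ih =>
      intro s hs
      have hsplit : s + (c + 1) * (j - i) = (s - i + c * (j - i)) + j := by
        rw [add_one_mul]; omega
      rw [hsplit, Function.iterate_add, ← hfij, ← Function.iterate_add,
        show s - i + c * (j - i) + i = s + c * (j - i) by omega, ih s hs]
  have hle : i + 1 ≤ (i + 1) * (j - i) := Nat.le_mul_of_pos_right _ (by omega)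
  exact ⟨(i + 1) * (j - i), by omega, hperiod _ _ (by omega)⟩

lemma iterate_add_eq_of_add_self_eq {α : Type*} {f : α → α} {e : ℕ}
    (he : f^[e + e] = f^[e]) {s : ℕ} (hs : e ≤ s) : f^[s + e] = f^[s] := by
  obtain ⟨r, rfl⟩ := Nat.exists_eq_add_of_le' hs
  rw [Nat.add_assoc, Function.iterate_add, he, ← Function.iterate_add]

/-- For large `l`, `(m k^e)_k^l` and `(m k^(2e))_k^l` both read: a block of zeros, the digits
of `m`, then `e` resp. `2e` zeros. -/
lemma eqvN_mul_pow_add_self {k : ℕ} (hk : 2 ≤ k) {S : Type*} {δ : ℕ → S → S} {e : ℕ}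
    (he : (δ 0)^[e + e] = (δ 0)^[e]) (m : ℕ) :
    EqvN k δ (m * k ^ e) (m * k ^ (e + e)) := by
  have hm : m < k ^ m := Nat.lt_pow_self (by omega)
  refine ⟨m + 3 * e, fun l hl => ?_⟩
  obtain ⟨t, rfl⟩ : ∃ t, l = m + t + e + e := ⟨l - m - 2 * e, by omega⟩
  have hshort : deltaW δ (padk k (m + t + e + e) (m * k ^ e)) =
      (δ 0)^[t + e] ∘ deltaW δ (padk k m m) ∘ (δ 0)^[e] := by
    rw [show m + t + e + e = m + (t + e) + e by omega, deltaW_padk_mul_pow (by omega) hm]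
  rw [hshort, Nat.add_assoc (m + t), deltaW_padk_mul_pow (by omega) hm, he,
    iterate_add_eq_of_add_self_eq he (by omega : e ≤ t)]

lemma not_modEq_mul_self {p a : ℕ} (hp : p.Prime) (ha : 2 ≤ a) (hap : a < p) :
    ¬ a ≡ a * a [MOD p] := by
  intro h
  have hunit : 1 ≡ a [MOD p] :=
    Nat.ModEq.cancel_left_of_coprime (Nat.coprime_of_lt_prime (by omega) hap hp) (by simpa using h)
  have := hunit.eq_of_lt_of_lt hp.one_lt hap
  omega

theorem stmt13_general (k : ℕ) (hk : 2 ≤ k) (S : Type) [Fintype S]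
    (δ : ℕ → S → S) :
    ∃ p₃ : ℕ, ∀ p : ℕ, p.Prime → p₃ < p →
      ∃ n₁ n₂ : ℕ, ¬ n₁ ≡ n₂ [MOD p] ∧
        EqvN k δ n₁ n₂ ∧ EqvN k δ (p * n₁) (p * n₂) := by
  obtain ⟨e, he_pos, he⟩ := Finite.exists_iterate_add_self_eq (δ 0)
  have hke : 2 ≤ k ^ e := hk.trans (Nat.le_self_pow he_pos.ne' k)
  refine ⟨k ^ e, fun p hp hpk => ⟨k ^ e, k ^ (e + e), ?_, ?_, eqvN_mul_pow_add_self hk he p⟩⟩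
  · rw [pow_add]
    exact not_modEq_mul_self hp hke hpk
  · simpa using eqvN_mul_pow_add_self hk he 1

/-- for every sufficiently large prime `p` there are `n₁ ≢ n₂ (mod p)`
with `n₁ ∼ n₂` and `p n₁ ∼ p n₂` for the equivalence induced by the automaton. -/
theorem stmt13 (k : ℕ) (hk : 2 ≤ k) (S : Type) [Fintype S] (s₀ : S)
    (δ : ℕ → S → S) (τ : S → ℂ) :
    ∃ p₃ : ℕ, ∀ p : ℕ, p.Prime → p₃ < p →
      ∃ n₁ n₂ : ℕ, ¬ n₁ ≡ n₂ [MOD p] ∧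
        EqvN k δ n₁ n₂ ∧ EqvN k δ (p * n₁) (p * n₂) :=
  stmt13_general k hk S δ

end MultAuto
end
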